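/- With a = (−1+√−15)/2 and b = (1−√−23)/2 in ℂ, the system of 9 linear equations in 13 nonnegative real unknowns x1,...,x13 given by: x1+22x2+230x3+748x4+748x5+3520x6+5312x7+8602x8+8602x9+36938x10+83948x11+156538x12+1835008x13 = 30; x1−5x2+14x3−8x4−8x5−44x6+20x7+43x8+43x9−79x10−22x11+100x12−128x13 = 0; x1+4x2+5x3+x4+x5+10x6+2x7−20x8−20x9−52x10−58x11−80x12−128x13 = 6; x1−3x2+5x3−2x4−2x5−5x6+12x7+2x8+2x9+13x10−2x11−12x12+8x13 = 0; x1+x2−x3−x4−x5−x6−x7−x8−x9−x10−3x11−3x12 = 2; x1−x3+a·x4+ā·x5+x6−a·x8−ā·x9+x10−2x11+2x13 = 0; x1−x3+ā·x4+a·x5+x6−ā·x8−a·x9+x10−2x11+2x13 = 0; x1−x2+b·x4+b̄·x5+x6−x7−2x11−x13 = 0; x1−x2+b̄·x4+b·x5+x6−x7−2x11−x13 = 0, has no solution with all xi ≥ 0. -/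
import Mathlib

open Complex in
theorem stmt_11 :
    ¬ ∃ x : Fin 14 → ℝ, (∀ i, 0 ≤ x i) ∧
      (let a : ℂ := (-1 + Real.sqrt 15 * I) / 2
       let b : ℂ := (1 - Real.sqrt 23 * I) / 2
       let y : Fin 14 → ℂ := fun i => (x i : ℂ)
       x 1 + 22*x 2 + 230*x 3 + 748*x 4 + 748*x 5 + 3520*x 6 + 5312*x 7 + 8602*x 8
          + 8602*x 9 + 36938*x 10 + 83948*x 11 + 156538*x 12 + 1835008*x 13 = 30 ∧
       x 1 - 5*x 2 + 14*x 3 - 8*x 4 - 8*x 5 - 44*x 6 + 20*x 7 + 43*x 8 + 43*x 9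
          - 79*x 10 - 22*x 11 + 100*x 12 - 128*x 13 = 0 ∧
       x 1 + 4*x 2 + 5*x 3 + x 4 + x 5 + 10*x 6 + 2*x 7 - 20*x 8 - 20*x 9
          - 52*x 10 - 58*x 11 - 80*x 12 - 128*x 13 = 6 ∧
       x 1 - 3*x 2 + 5*x 3 - 2*x 4 - 2*x 5 - 5*x 6 + 12*x 7 + 2*x 8 + 2*x 9
          + 13*x 10 - 2*x 11 - 12*x 12 + 8*x 13 = 0 ∧
       x 1 + x 2 - x 3 - x 4 - x 5 - x 6 - x 7 - x 8 - x 9 - x 10 - 3*x 11 - 3*x 12 = 2 ∧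
       y 1 - y 3 + a * y 4 + (starRingEnd ℂ) a * y 5 + y 6 - a * y 8
          - (starRingEnd ℂ) a * y 9 + y 10 - 2*y 11 + 2*y 13 = 0 ∧
       y 1 - y 3 + (starRingEnd ℂ) a * y 4 + a * y 5 + y 6 - (starRingEnd ℂ) a * y 8
          - a * y 9 + y 10 - 2*y 11 + 2*y 13 = 0 ∧
       y 1 - y 2 + b * y 4 + (starRingEnd ℂ) b * y 5 + y 6 - y 7 - 2*y 11 - y 13 = 0 ∧
       y 1 - y 2 + (starRingEnd ℂ) b * y 4 + b * y 5 + y 6 - y 7 - 2*y 11 - y 13 = 0) := by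
  rintro ⟨x, hx, h⟩
  simp only at h
  obtain ⟨h1, h2, h3, h4, h5, h6, h7, h8, h9⟩ := h
  have ca : (starRingEnd ℂ) ((-1 + (Real.sqrt 15 : ℝ) * I) / 2) = (-1 - Real.sqrt 15 * I) / 2 := by
    simp [map_div₀, map_ofNat, Complex.conj_ofReal, Complex.conj_I]
    ring
  have cb : (starRingEnd ℂ) ((1 - (Real.sqrt 23 : ℝ) * I) / 2) = (1 + Real.sqrt 23 * I) / 2 := by
    simp [map_div₀, map_ofNat, Complex.conj_ofReal, Complex.conj_I]
  rw [ca] at h6 h7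
  rw [cb] at h8 h9
  have s15 : (Real.sqrt 15 : ℂ) ≠ 0 := by
    simp [Complex.ofReal_eq_zero, Real.sqrt_eq_zero']
  have s23 : (Real.sqrt 23 : ℂ) ≠ 0 := by
    simp [Complex.ofReal_eq_zero, Real.sqrt_eq_zero']
  -- imaginary parts
  have k1 : ((x 4 - x 5 : ℝ) : ℂ) = 0 := by
    have := sub_eq_zero.mpr (h8.trans h9.symm)
    have h' : (Real.sqrt 23 : ℂ) * I * ((x 4 : ℂ) - x 5) = 0 := by
      linear_combination -(h8 - h9)
    have := mul_eq_zero.mp h'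
    rcases this with h'' | h''
    · exact absurd (mul_eq_zero.mp h'') (by push_neg; exact ⟨s23, Complex.I_ne_zero⟩)
    · push_cast; exact h''
  have e45 : x 4 = x 5 := by exact_mod_cast sub_eq_zero.mp (by exact_mod_cast k1)
  have k2 : ((x 4 - x 5 - x 8 + x 9 : ℝ) : ℂ) = 0 := by
    have h' : (Real.sqrt 15 : ℂ) * I * ((x 4 : ℂ) - x 5 - x 8 + x 9) = 0 := by
      linear_combination h6 - h7
    rcases mul_eq_zero.mp h' with h'' | h''
    · exact absurd (mul_eq_zero.mp h'') (by push_neg; exact ⟨s15, Complex.I_ne_zero⟩)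
    · push_cast; exact h''
  have e89 : x 8 = x 9 := by
    have : (x 4 - x 5 - x 8 + x 9 : ℝ) = 0 := by exact_mod_cast k2
    linarith
  -- real parts (sums)
  have e6 : 2*x 1 - 2*x 3 - x 4 - x 5 + 2*x 6 + x 8 + x 9 + 2*x 10 - 4*x 11 + 4*x 13 = 0 := by
    have : ((2*x 1 - 2*x 3 - x 4 - x 5 + 2*x 6 + x 8 + x 9 + 2*x 10 - 4*x 11 + 4*x 13 : ℝ) : ℂ) = 0 := by
      push_cast; linear_combination h6 + h7
    exact_mod_cast this
  have e7 : 2*x 1 - 2*x 2 + x 4 + x 5 + 2*x 6 - 2*x 7 - 4*x 11 - 2*x 13 = 0 := by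
    have : ((2*x 1 - 2*x 2 + x 4 + x 5 + 2*x 6 - 2*x 7 - 4*x 11 - 2*x 13 : ℝ) : ℂ) = 0 := by
      push_cast; linear_combination h8 + h9
    exact_mod_cast this
  have p4 := hx 4; have p5 := hx 5; have p6 := hx 6; have p7 := hx 7
  have p8 := hx 8; have p9 := hx 9; have p10 := hx 10; have p11 := hx 11
  have p12 := hx 12; have p13 := hx 13
  linarith [mul_nonneg (by norm_num : (0:ℝ) ≤ 687/22) p4]
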